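/- arXiv:1602.04181 — 6 statements merged into one kernel-verified Lean document; each statement's English description precedes it below -/
import Mathlib

section
/- Let s1 > s2 > s3 > 0 be reals, p ∈ (0,1/2), q ∈ [0,1/2). Define a' = p(1−q)s1 + (1−p)(1−q)s2 + q·s3 and b' = (p²(1−q)+pq(1−p))s1 + ((1−p)²(1−q)+pq(1−p))s2 + (2p(1−p)(1−q)+2p²q)s3. Then a' − b' = p(1−p)(1−2q)(s1+s2−2s3) + q(1−2p)s3, and consequently a' > b'. -/
theorem noisy_expected_score_gap (s1 s2 s3 p q : ℝ)
    (h12 : s1 > s2) (h23 : s2 > s3) (h3 : s3 > 0)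
    (hp0 : 0 < p) (hp : p < 1/2) (hq0 : 0 ≤ q) (hq : q < 1/2) :
    (p*(1-q)*s1 + (1-p)*(1-q)*s2 + q*s3)
      - ((p^2*(1-q) + p*q*(1-p))*s1 + ((1-p)^2*(1-q) + p*q*(1-p))*s2
          + (2*p*(1-p)*(1-q) + 2*p^2*q)*s3)
      = p*(1-p)*(1-2*q)*(s1 + s2 - 2*s3) + q*(1-2*p)*s3
    ∧ (p*(1-q)*s1 + (1-p)*(1-q)*s2 + q*s3)
      > ((p^2*(1-q) + p*q*(1-p))*s1 + ((1-p)^2*(1-q) + p*q*(1-p))*s2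
          + (2*p*(1-p)*(1-q) + 2*p^2*q)*s3) := by
  have heq : (p*(1-q)*s1 + (1-p)*(1-q)*s2 + q*s3)
      - ((p^2*(1-q) + p*q*(1-p))*s1 + ((1-p)^2*(1-q) + p*q*(1-p))*s2
          + (2*p*(1-p)*(1-q) + 2*p^2*q)*s3)
      = p*(1-p)*(1-2*q)*(s1 + s2 - 2*s3) + q*(1-2*p)*s3 := by ring
  refine ⟨heq, ?_⟩
  have h1 : p*(1-p)*(1-2*q)*(s1 + s2 - 2*s3) > 0 := by
    apply mul_pos (mul_pos (mul_pos hp0 (by linarith)) (by linarith)) (by linarith)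
  have h2 : q*(1-2*p)*s3 ≥ 0 := by
    apply mul_nonneg (mul_nonneg hq0 (by linarith)) (le_of_lt h3)
  nlinarith [heq]
end

section
/- Let A be a real square matrix with all entries strictly positive, and let v be an eigenvector of A corresponding to the eigenvalue of maximum modulus (the Perron eigenvalue), normalized to have positive first nonzero coordinate. Then every component of v is strictly positive. -/
/-!
Put `u = |v|`. The triangle inequality gives `|μ| • u ≤ A *ᵥ u`. If this were strict somewhere,
positivity of `A` would produce `w = A *ᵥ u > 0` and some `c > |μ|` with `c • w ≤ A *ᵥ w`, whence
`tr (A ^ (k + 1)) ≥ δ c ^ k` for a fixed `δ > 0`. But `tr (A ^ (k + 1))` is the sum of the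
`(k + 1)`-th powers of the complex eigenvalues, so it is at most `n |μ| ^ (k + 1)`: impossible for
large `k`. Hence `A *ᵥ u = |μ| • u`. Now `A *ᵥ (u + v)` has entries `|μ v i| + μ v i` and is
positive because `u + v ≥ 0` does not vanish, so every `μ v i` is positive; the positive coordinate
of `v` then forces `μ > 0` and `v > 0`.
-/

open Matrix Filter Topology

theorem exists_pos_smul_le {ι : Type*} [Finite ι] {x : ι → ℝ} (hx : ∀ i, 0 < x i) (w : ι → ℝ) :
    ∃ ε : ℝ, 0 < ε ∧ ε • w ≤ x := by
  have hsmall : ∀ᶠ ε in 𝓝[>] (0 : ℝ), ∀ i, ε * w i < x i :=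
    eventually_all.2 fun i => nhdsWithin_le_nhds <|
      ((continuous_mul_const (w i)).tendsto' 0 0 (zero_mul _)).eventually (gt_mem_nhds (hx i))
  obtain ⟨ε, hε, hε0⟩ := (hsmall.and self_mem_nhdsWithin).exists
  exact ⟨ε, hε0, fun i => (hε i).le⟩

namespace Matrix

variable {ι : Type*} [Fintype ι] {A : Matrix ι ι ℝ}

theorem mulVec_mono_of_nonneg (hA : ∀ i j, 0 ≤ A i j) {x y : ι → ℝ} (h : x ≤ y) :
    A *ᵥ x ≤ A *ᵥ y :=
  fun i => Finset.sum_le_sum fun j _ => mul_le_mul_of_nonneg_left (h j) (hA i j)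

theorem abs_mulVec_le (hA : ∀ i j, 0 ≤ A i j) (x : ι → ℝ) : |A *ᵥ x| ≤ A *ᵥ |x| := fun i => by
  simpa [mulVec, dotProduct, abs_mul, abs_of_nonneg (hA i _)] using
    Finset.abs_sum_le_sum_abs (fun j => A i j * x j) Finset.univ

theorem mulVec_pos_of_pos (hA : ∀ i j, 0 < A i j) {x : ι → ℝ} (hx : 0 ≤ x) (hx0 : x ≠ 0)
    (i : ι) : 0 < (A *ᵥ x) i := by
  obtain ⟨j, hj⟩ := Function.ne_iff.1 hx0
  exact Finset.sum_pos' (fun l _ => mul_nonneg (hA i l).le (hx l))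
    ⟨j, Finset.mem_univ j, mul_pos (hA i j) ((hx j).lt_of_ne' hj)⟩

variable [DecidableEq ι]

theorem exists_mulVec_eq_smul_of_mem_spectrum {K : Type*} [Field K] {M : Matrix ι ι K} {z : K}
    (hz : z ∈ spectrum K M) : ∃ w ≠ 0, M *ᵥ w = z • w := by
  rw [← spectrum_toLin', ← Module.End.hasEigenvalue_iff_mem_spectrum] at hz
  obtain ⟨w, hw⟩ := hz.exists_hasEigenvector
  exact ⟨w, hw.2, by simpa using Module.End.mem_eigenspace_iff.1 hw.1⟩

theorem norm_trace_pow_le {M : Matrix ι ι ℂ} {r : ℝ} (hM : ∀ z ∈ spectrum ℂ M, ‖z‖ ≤ r)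
    (k : ℕ) : ‖(M ^ k).trace‖ ≤ Fintype.card ι * r ^ k := by
  rcases k.eq_zero_or_pos with rfl | hk
  · simp
  have hroots : ∀ z ∈ (M ^ k).charpoly.roots, ‖z‖ ≤ r ^ k := by
    intro z hz
    rw [Polynomial.mem_roots (charpoly_monic _).ne_zero, ← mem_spectrum_iff_isRoot_charpoly,
      spectrum.map_pow_of_pos M hk] at hz
    obtain ⟨y, hy, rfl⟩ := hz
    rw [norm_pow]
    exact pow_le_pow_left₀ (norm_nonneg y) (hM y hy) k
  calc ‖(M ^ k).trace‖ = ‖(M ^ k).charpoly.roots.sum‖ := by rw [trace_eq_sum_roots_charpoly]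
    _ ≤ ((M ^ k).charpoly.roots.map (‖·‖)).sum := norm_multiset_sum_le _
    _ ≤ ((M ^ k).charpoly.roots.map (‖·‖)).card • r ^ k :=
        Multiset.sum_le_card_nsmul _ _ fun _ hx => by
          obtain ⟨z, hz, rfl⟩ := Multiset.mem_map.1 hx
          exact hroots z hz
    _ = Fintype.card ι * r ^ k := by
        rw [Multiset.card_map, IsAlgClosed.card_roots_eq_natDegree, charpoly_natDegree_eq_dim,
          nsmul_eq_mul]

theorem trace_pow_le_of_norm_spectrum_le {r : ℝ}
    (hA : ∀ z ∈ spectrum ℂ (A.map Complex.ofReal), ‖z‖ ≤ r) (k : ℕ) :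
    (A ^ k).trace ≤ Fintype.card ι * r ^ k := by
  have hmap : ((A ^ k).trace : ℂ) = (A.map Complex.ofReal ^ k).trace :=
    (AddMonoidHom.map_trace Complex.ofRealHom (A ^ k)).trans
      (congrArg trace (Matrix.map_pow A Complex.ofRealHom k))
  calc (A ^ k).trace ≤ ‖((A ^ k).trace : ℂ)‖ := by
        rw [Complex.norm_real]; exact Real.le_norm_self _
    _ ≤ Fintype.card ι * r ^ k := hmap ▸ norm_trace_pow_le hA k

theorem pow_smul_le_pow_mulVec (hA : ∀ i j, 0 ≤ A i j) {c : ℝ} (hc : 0 ≤ c) {w : ι → ℝ}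
    (h : c • w ≤ A *ᵥ w) (k : ℕ) : c ^ k • w ≤ A ^ k *ᵥ w := by
  induction k with
  | zero => simp
  | succ k ih =>
    calc c ^ (k + 1) • w = c ^ k • (c • w) := by rw [pow_succ, mul_smul]
      _ ≤ c ^ k • (A *ᵥ w) := smul_le_smul_of_nonneg_left h (pow_nonneg hc k)
      _ = A *ᵥ (c ^ k • w) := by rw [mulVec_smul]
      _ ≤ A *ᵥ (A ^ k *ᵥ w) := mulVec_mono_of_nonneg hA ih
      _ = A ^ (k + 1) *ᵥ w := by rw [mulVec_mulVec, pow_succ']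

theorem exists_pos_mul_pow_le_trace_pow_succ (hA : ∀ i j, 0 < A i j) {w : ι → ℝ} (hw : 0 ≤ w)
    (hw0 : w ≠ 0) {c : ℝ} (hc : 0 ≤ c) (h : c • w ≤ A *ᵥ w) :
    ∃ δ : ℝ, 0 < δ ∧ ∀ k : ℕ, δ * c ^ k ≤ (A ^ (k + 1)).trace := by
  obtain ⟨i, hi⟩ := Function.ne_iff.1 hw0
  replace hi : 0 < w i := (hw i).lt_of_ne' hi
  obtain ⟨ε, hε, hεA⟩ := exists_pos_smul_le (fun j => hA j i) w
  have hAk := pow_apply_nonneg fun i j => (hA i j).le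
  refine ⟨ε * w i, mul_pos hε hi, fun k => ?_⟩
  calc ε * w i * c ^ k = ε * (c ^ k • w) i := by simp only [Pi.smul_apply, smul_eq_mul]; ring
    _ ≤ ε * (A ^ k *ᵥ w) i := by
        gcongr; exact pow_smul_le_pow_mulVec (fun i j => (hA i j).le) hc h k i
    _ = ∑ j, (A ^ k) i j * (ε * w j) := by
        simp only [mulVec, dotProduct, Finset.mul_sum]; ring_nf
    _ ≤ ∑ j, (A ^ k) i j * A j i :=
        Finset.sum_le_sum fun j _ => mul_le_mul_of_nonneg_left (hεA j) (hAk k i j)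
    _ = (A ^ (k + 1)) i i := by rw [pow_succ, mul_apply]
    _ ≤ (A ^ (k + 1)).trace :=
        Finset.single_le_sum (fun j _ => hAk (k + 1) j j) (Finset.mem_univ i)

theorem le_of_smul_le_mulVec (hA : ∀ i j, 0 < A i j) {r : ℝ} (hr : 0 ≤ r)
    (hspec : ∀ z ∈ spectrum ℂ (A.map Complex.ofReal), ‖z‖ ≤ r) {w : ι → ℝ} (hw : 0 ≤ w)
    (hw0 : w ≠ 0) {c : ℝ} (h : c • w ≤ A *ᵥ w) : c ≤ r := by
  by_contra! hrc
  have hc : 0 < c := hr.trans_lt hrc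
  obtain ⟨δ, hδ, hlow⟩ := exists_pos_mul_pow_le_trace_pow_succ hA hw hw0 hc.le h
  have hbound (k : ℕ) : δ ≤ Fintype.card ι * r * (r / c) ^ k := by
    have := (hlow k).trans (trace_pow_le_of_norm_spectrum_le hspec (k + 1))
    rw [div_pow, ← mul_div_assoc, le_div_iff₀ (pow_pos hc k)]
    rwa [pow_succ', ← mul_assoc] at this
  have hlim : Tendsto (fun k : ℕ => Fintype.card ι * r * (r / c) ^ k) atTop (𝓝 0) := by
    simpa using (tendsto_pow_atTop_nhds_zero_of_lt_one (by positivity)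
      ((div_lt_one hc).2 hrc)).const_mul (Fintype.card ι * r)
  exact hδ.not_ge (ge_of_tendsto' hlim hbound)

theorem mulVec_eq_smul_of_smul_le_mulVec (hA : ∀ i j, 0 < A i j) {r : ℝ} (hr : 0 ≤ r)
    (hspec : ∀ z ∈ spectrum ℂ (A.map Complex.ofReal), ‖z‖ ≤ r) {u : ι → ℝ} (hu : 0 ≤ u)
    (hu0 : u ≠ 0) (h : r • u ≤ A *ᵥ u) : A *ᵥ u = r • u := by
  by_contra hne
  have hAu := mulVec_pos_of_pos hA hu hu0
  have hAu0 : A *ᵥ u ≠ 0 := by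
    obtain ⟨j, -⟩ := Function.ne_iff.1 hu0
    exact fun h0 => (hAu j).ne' (congrFun h0 j)
  -- the excess of `A *ᵥ u` over `r • u` is pushed by `A` to a strictly positive vector
  have hexcess : ∀ i, 0 < (A *ᵥ (A *ᵥ u) - r • A *ᵥ u) i := by
    rw [← mulVec_smul, ← mulVec_sub]
    exact mulVec_pos_of_pos hA (sub_nonneg.2 h) (sub_ne_zero.2 hne)
  obtain ⟨ε, hε, hεw⟩ := exists_pos_smul_le hexcess (A *ᵥ u)
  have := le_of_smul_le_mulVec hA hr hspec (fun i => (hAu i).le) hAu0 (c := r + ε)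
    (by rw [add_smul]; exact le_sub_iff_add_le'.1 hεw)
  linarith

end Matrix

theorem perron_eigenvector_positive_general {n : ℕ}
    (A : Matrix (Fin n) (Fin n) ℝ) (hA : ∀ i j, 0 < A i j)
    (μ : ℝ) (v : Fin n → ℝ)
    (heig : A.mulVec v = μ • v)
    -- μ is the eigenvalue of maximum modulus: every complex eigenvalue of A
    -- has modulus at most |μ|
    (hmax : ∀ (μc : ℂ) (w : Fin n → ℂ), w ≠ 0 →
      (A.map (Complex.ofReal)).mulVec w = μc • w → ‖μc‖ ≤ |μ|)
    -- normalization: the first nonzero coordinate of v is positive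
    (hnorm : ∃ i, 0 < v i ∧ ∀ j, j < i → v j = 0) :
    ∀ i, 0 < v i := by
  obtain ⟨i₀, hi₀, -⟩ := hnorm
  have hspec : ∀ z ∈ spectrum ℂ (A.map Complex.ofReal), ‖z‖ ≤ |μ| := fun z hz =>
    let ⟨w, hw0, hw⟩ := exists_mulVec_eq_smul_of_mem_spectrum hz
    hmax z w hw0 hw
  have habs : A *ᵥ |v| = |μ| • |v| := by
    refine mulVec_eq_smul_of_smul_le_mulVec hA (abs_nonneg μ) hspec (abs_nonneg v)
      (fun h => hi₀.ne' (abs_eq_zero.1 (congrFun h i₀))) ?_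
    have := abs_mulVec_le (fun i j => (hA i j).le) v
    rw [heig] at this
    exact fun i => by simpa [abs_mul] using this i
  have hμv (i : Fin n) : 0 < μ * v i := by
    have hpos := mulVec_pos_of_pos hA (x := |v| + v)
      (fun j => neg_le_iff_add_nonneg.1 (neg_le_abs (v j)))
      (fun h => by simpa [abs_of_pos hi₀, hi₀.ne'] using congrFun h i₀) i
    rw [mulVec_add, habs, heig] at hpos
    simp only [Pi.add_apply, Pi.smul_apply, Pi.abs_apply, smul_eq_mul, ← abs_mul] at hpos
    cases abs_cases (μ * v i) <;> linarith
  have hμ : 0 < μ := pos_of_mul_pos_left (hμv i₀) hi₀.le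
  exact fun i => pos_of_mul_pos_right (hμv i) hμ.le

theorem perron_eigenvector_positive {n : ℕ}
    (A : Matrix (Fin n) (Fin n) ℝ) (hA : ∀ i j, 0 < A i j)
    (μ : ℝ) (v : Fin n → ℝ) (hv : v ≠ 0)
    (heig : A.mulVec v = μ • v)
    -- μ is the eigenvalue of maximum modulus: every complex eigenvalue of A
    -- has modulus at most |μ|
    (hmax : ∀ (μc : ℂ) (w : Fin n → ℂ), w ≠ 0 →
      (A.map (Complex.ofReal)).mulVec w = μc • w → ‖μc‖ ≤ |μ|)
    -- normalization: the first nonzero coordinate of v is positive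
    (hnorm : ∃ i, 0 < v i ∧ ∀ j, j < i → v j = 0) :
    ∀ i, 0 < v i :=
  perron_eigenvector_positive_general A hA μ v heig hmax hnorm
end

section
/- Let G1 and G2 be n×n real symmetric matrices with orthonormal eigenbases {v_i} and {u_i} ordered so that the corresponding eigenvalues λ_i(G1) and λ_i(G2) are both nonincreasing. Then X0 = Σ_i v_i u_iᵀ is an orthogonal matrix that maximizes Tr(G1 X G2 Xᵀ) over all orthogonal matrices X, and the maximum value equals Σ_i λ_i(G1) λ_i(G2). -/
open Matrix

lemma ds_bound {n : ℕ} (a b : Fin n → ℝ) (ha : Antitone a) (hb : Antitone b)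
    (S : Matrix (Fin n) (Fin n) ℝ) (hS : S ∈ doublyStochastic ℝ (Fin n)) :
    ∑ i, ∑ j, a i * b j * S i j ≤ ∑ i, a i * b i := by
  obtain ⟨w, hw0, hw1, hwS⟩ := exists_eq_sum_perm_of_mem_doublyStochastic hS
  have hS2 : ∀ i j, S i j = ∑ σ : Equiv.Perm (Fin n), w σ * (if σ i = j then 1 else 0) := by
    intro i j
    rw [← hwS]
    simp [Matrix.sum_apply, Equiv.Perm.permMatrix, PEquiv.toMatrix_apply,
      Equiv.toPEquiv_apply, eq_comm]
  have key : ∑ i, ∑ j, a i * b j * S i j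
      = ∑ σ : Equiv.Perm (Fin n), w σ * ∑ i, a i * b (σ i) := by
    calc ∑ i, ∑ j, a i * b j * S i j
        = ∑ i, ∑ σ : Equiv.Perm (Fin n), ∑ j,
            a i * b j * (w σ * if σ i = j then 1 else 0) := by
          refine Finset.sum_congr rfl fun i _ => ?_
          rw [← Finset.sum_comm]
          refine Finset.sum_congr rfl fun j _ => ?_
          rw [hS2 i j, Finset.mul_sum]
      _ = ∑ σ : Equiv.Perm (Fin n), ∑ i, ∑ j,
            a i * b j * (w σ * if σ i = j then 1 else 0) := Finset.sum_comm
      _ = ∑ σ : Equiv.Perm (Fin n), w σ * ∑ i, a i * b (σ i) := by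
          refine Finset.sum_congr rfl fun σ _ => ?_
          rw [Finset.mul_sum]
          refine Finset.sum_congr rfl fun i _ => ?_
          rw [Finset.sum_eq_single (σ i)]
          · simp; ring
          · intro j _ hj; simp [Ne.symm hj]
          · simp
  rw [key]
  calc ∑ σ : Equiv.Perm (Fin n), w σ * ∑ i, a i * b (σ i)
      ≤ ∑ σ : Equiv.Perm (Fin n), w σ * ∑ i, a i * b i := by
        refine Finset.sum_le_sum fun σ _ => mul_le_mul_of_nonneg_left ?_ (hw0 σ)
        exact (ha.monovary hb).sum_mul_comp_perm_le_sum_mul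
    _ = ∑ i, a i * b i := by rw [← Finset.sum_mul, hw1, one_mul]

lemma trace_diag {n : ℕ} (a b : Fin n → ℝ) (Y : Matrix (Fin n) (Fin n) ℝ) :
    (Matrix.diagonal a * Y * Matrix.diagonal b * Yᵀ).trace
      = ∑ i, ∑ j, a i * b j * (Y i j)^2 := by
  have e1 : Matrix.diagonal a * Y * Matrix.diagonal b
      = Matrix.of (fun i j => a i * Y i j * b j) := by
    ext i j
    simp [Matrix.mul_diagonal, Matrix.diagonal_mul]
  rw [e1]
  simp only [Matrix.trace, Matrix.diag_apply, Matrix.mul_apply, Matrix.transpose_apply,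
    Matrix.of_apply]
  exact Finset.sum_congr rfl fun i _ => Finset.sum_congr rfl fun j _ => by ring

theorem orthogonal_relaxation_optimal {n : ℕ}
    (G1 G2 V U : Matrix (Fin n) (Fin n) ℝ) (lam1 lam2 : Fin n → ℝ)
    (hG1 : G1.IsSymm) (hG2 : G2.IsSymm)
    -- V and U are orthogonal matrices of eigenvectors of G1 and G2 resp.
    (hV : Vᵀ * V = 1) (hU : Uᵀ * U = 1)
    (hG1V : G1 * V = V * Matrix.diagonal lam1)
    (hG2U : G2 * U = U * Matrix.diagonal lam2)
    -- eigenvalues are sorted in nonincreasing order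
    (hlam1 : Antitone lam1) (hlam2 : Antitone lam2) :
    (V * Uᵀ)ᵀ * (V * Uᵀ) = 1
    ∧ (∀ X : Matrix (Fin n) (Fin n) ℝ, Xᵀ * X = 1 →
        (G1 * X * G2 * Xᵀ).trace ≤ (G1 * (V * Uᵀ) * G2 * (V * Uᵀ)ᵀ).trace)
    ∧ (G1 * (V * Uᵀ) * G2 * (V * Uᵀ)ᵀ).trace = ∑ i, lam1 i * lam2 i := by
  have hVVt : V * Vᵀ = 1 := mul_eq_one_comm.mp hV
  have hUUt : U * Uᵀ = 1 := mul_eq_one_comm.mp hU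
  have hG1eq : G1 = V * Matrix.diagonal lam1 * Vᵀ := by
    rw [← hG1V, Matrix.mul_assoc, hVVt, Matrix.mul_one]
  have hG2eq : G2 = U * Matrix.diagonal lam2 * Uᵀ := by
    rw [← hG2U, Matrix.mul_assoc, hUUt, Matrix.mul_one]
  have h1 : (V * Uᵀ)ᵀ * (V * Uᵀ) = 1 := by
    simp only [Matrix.transpose_mul, Matrix.transpose_transpose, Matrix.mul_assoc]
    rw [← Matrix.mul_assoc Vᵀ V, hV, Matrix.one_mul, hUUt]
  have h3 : (G1 * (V * Uᵀ) * G2 * (V * Uᵀ)ᵀ).trace = ∑ i, lam1 i * lam2 i := by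
    rw [hG1eq, hG2eq]
    have e : V * Matrix.diagonal lam1 * Vᵀ * (V * Uᵀ) * (U * Matrix.diagonal lam2 * Uᵀ)
        * (V * Uᵀ)ᵀ = V * (Matrix.diagonal lam1 * (Matrix.diagonal lam2 * Vᵀ)) := by
      simp only [Matrix.transpose_mul, Matrix.transpose_transpose, Matrix.mul_assoc]
      rw [← Matrix.mul_assoc Vᵀ V, hV, Matrix.one_mul,
        ← Matrix.mul_assoc Uᵀ U, hU, Matrix.one_mul,
        ← Matrix.mul_assoc Uᵀ U, hU, Matrix.one_mul]
    rw [e, Matrix.trace_mul_comm]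
    simp only [Matrix.mul_assoc]
    rw [hV, Matrix.mul_one, Matrix.diagonal_mul_diagonal, Matrix.trace_diagonal]
  refine ⟨h1, fun X hX => ?_, h3⟩
  have hXXt : X * Xᵀ = 1 := mul_eq_one_comm.mp hX
  set Y := Vᵀ * X * U with hY
  have hYt : Yᵀ = Uᵀ * (Xᵀ * V) := by
    rw [hY]
    simp [Matrix.transpose_mul, Matrix.mul_assoc]
  have hYYt : Y * Yᵀ = 1 := by
    rw [hY, hYt]
    simp only [Matrix.mul_assoc]
    rw [← Matrix.mul_assoc U Uᵀ, hUUt, Matrix.one_mul,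
      ← Matrix.mul_assoc X Xᵀ, hXXt, Matrix.one_mul, hV]
  have hYtY : Yᵀ * Y = 1 := mul_eq_one_comm.mp hYYt
  have hSmem : (Matrix.of fun i j => (Y i j)^2) ∈ doublyStochastic ℝ (Fin n) := by
    rw [mem_doublyStochastic_iff_sum]
    refine ⟨fun i j => sq_nonneg (Y i j), fun i => ?_, fun j => ?_⟩
    · have := congrFun (congrFun hYYt i) i
      simpa [Matrix.mul_apply, Matrix.one_apply, Matrix.of_apply, sq] using this
    · have := congrFun (congrFun hYtY j) j
      simpa [Matrix.mul_apply, Matrix.one_apply, Matrix.of_apply, sq, mul_comm] using this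
  have htr : (G1 * X * G2 * Xᵀ).trace
      = ∑ i, ∑ j, lam1 i * lam2 j * (Y i j)^2 := by
    rw [hG1eq, hG2eq]
    have e : V * Matrix.diagonal lam1 * Vᵀ * X * (U * Matrix.diagonal lam2 * Uᵀ) * Xᵀ
        = V * (Matrix.diagonal lam1 * (Y * (Matrix.diagonal lam2 * (Yᵀ * Vᵀ)))) := by
      rw [hY, hYt]
      simp only [Matrix.mul_assoc]
      rw [hVVt, Matrix.mul_one]
    rw [e, Matrix.trace_mul_comm]
    simp only [Matrix.mul_assoc]
    rw [hV, Matrix.mul_one]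
    simp only [← Matrix.mul_assoc]
    rw [trace_diag]
  rw [htr, h3]
  exact ds_bound lam1 lam2 hlam1 hlam2 _ hSmem
end

section
/- For any n×n complex matrices A and B, |Tr(AB)| ≤ Σ_{i=1}^n σ_i(A) σ_i(B), where σ_1 ≥ … ≥ σ_n denote singular values in decreasing order. (Von Neumann's trace inequality.) -/
/-!
Take singular value decompositions `A = U diag(σA) Vᴴ` and `B = W diag(σB) Xᴴ`. With the unitaries
`P = Vᴴ W` and `Q = Xᴴ U`, `tr(AB) = ∑ i j, σA i * P i j * σB j * Q j i`, and
`|P i j| |Q j i| ≤ (|P i j|² + |Q j i|²) / 2` bounds `|tr(AB)|` by the mean of `σA ⬝ᵥ M *ᵥ σB` over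
two doubly stochastic matrices `M`. By Birkhoff's theorem each of these is a convex combination of
the sums `∑ i, σA i * σB (τ i)`, `τ` a permutation, which the rearrangement inequality bounds by
`∑ i, σA i * σB i`.
-/

open Matrix

/-- `σ` lists the singular values of the square complex matrix `A` in
nonincreasing order: it is an antitone enumeration of the square roots of the
eigenvalues of `Aᴴ * A`. -/
def IsSingularValueSeq {n : ℕ} (A : Matrix (Fin n) (Fin n) ℂ) (σ : Fin n → ℝ) : Prop :=
  Antitone σ ∧ ∃ e : Equiv.Perm (Fin n), ∀ i,
    σ i = Real.sqrt ((Matrix.isHermitian_conjTranspose_mul_self A).eigenvalues (e i))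

theorem Monovary.dotProduct_mulVec_le_of_mem_doublyStochastic {ι R : Type*} [Fintype ι]
    [DecidableEq ι] [Field R] [LinearOrder R] [IsStrictOrderedRing R] {f g : ι → R}
    (hfg : Monovary f g) {M : Matrix ι ι R} (hM : M ∈ doublyStochastic R ι) :
    f ⬝ᵥ M *ᵥ g ≤ f ⬝ᵥ g := by
  obtain ⟨w, hw_nonneg, hw_sum, rfl⟩ := exists_eq_sum_perm_of_mem_doublyStochastic hM
  calc f ⬝ᵥ (∑ τ, w τ • τ.permMatrix R) *ᵥ g = ∑ τ, w τ * (f ⬝ᵥ g ∘ τ) := by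
        simp only [Matrix.sum_mulVec, smul_mulVec, permMatrix_mulVec, dotProduct_sum,
          dotProduct_smul, smul_eq_mul]
    _ ≤ ∑ τ, w τ * (f ⬝ᵥ g) := by
        gcongr with τ
        · exact hw_nonneg τ
        · exact hfg.sum_mul_comp_perm_le_sum_mul
    _ = f ⬝ᵥ g := by rw [← Finset.sum_mul, hw_sum, one_mul]

theorem exists_orthonormalBasis_eq_norm_smul_of_pairwise_inner_eq_zero {𝕜 E ι : Type*}
    [RCLike 𝕜] [NormedAddCommGroup E] [InnerProductSpace 𝕜 E] [FiniteDimensional 𝕜 E]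
    [Fintype ι] (card_ι : Module.finrank 𝕜 E = Fintype.card ι) {f : ι → E}
    (hf : Pairwise fun i j => inner 𝕜 (f i) (f j) = 0) :
    ∃ b : OrthonormalBasis ι 𝕜 E, ∀ i, f i = (‖f i‖ : 𝕜) • b i := by
  set v : ι → E := fun i => (‖f i‖⁻¹ : 𝕜) • f i
  have hv : Orthonormal 𝕜 ({i | f i ≠ 0}.domRestrict v) :=
    ⟨fun i => norm_smul_inv_norm i.2, fun i j hij => by
      simp [v, inner_smul_left, inner_smul_right, hf (Subtype.coe_ne_coe.2 hij)]⟩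
  obtain ⟨b, hb⟩ := hv.exists_orthonormalBasis_extension_of_card_eq card_ι
  refine ⟨b, fun i => ?_⟩
  by_cases hi : f i = 0
  · simp [hi]
  · rw [hb i hi, smul_inv_smul₀ (by simpa using hi)]

namespace Matrix

variable {𝕜 n : Type*} [RCLike 𝕜] [Fintype n] [DecidableEq n]

theorem sum_norm_sq_row_of_mem_unitaryGroup {U : Matrix n n 𝕜} (hU : U ∈ unitaryGroup n 𝕜)
    (i : n) : ∑ j, ‖U i j‖ ^ 2 = 1 := by
  have h : (U * star U) i i = 1 := by rw [Unitary.mul_star_self_of_mem hU, one_apply_eq]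
  simp only [mul_apply, star_apply, ← starRingEnd_apply, RCLike.mul_conj] at h
  exact_mod_cast h

theorem of_norm_sq_mem_doublyStochastic {U : Matrix n n 𝕜} (hU : U ∈ unitaryGroup n 𝕜) :
    of (fun i j => ‖U i j‖ ^ 2) ∈ doublyStochastic ℝ n := by
  refine mem_doublyStochastic_iff_sum.2 ⟨fun _ _ => sq_nonneg _,
    sum_norm_sq_row_of_mem_unitaryGroup hU, fun j => ?_⟩
  simpa using sum_norm_sq_row_of_mem_unitaryGroup (Unitary.star_mem hU) j

theorem norm_trace_diagonal_mul_mul_diagonal_mul_le {a b : n → ℝ} (ha : 0 ≤ a) (hb : 0 ≤ b)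
    (hab : Monovary a b) {P Q : Matrix n n 𝕜} (hP : P ∈ unitaryGroup n 𝕜)
    (hQ : Q ∈ unitaryGroup n 𝕜) :
    ‖trace (diagonal (fun i => (a i : 𝕜)) * P * diagonal (fun i => (b i : 𝕜)) * Q)‖ ≤
      a ⬝ᵥ b := by
  set MP : Matrix n n ℝ := of fun i j => ‖P i j‖ ^ 2
  set MQ : Matrix n n ℝ := (of fun i j => ‖Q i j‖ ^ 2)ᵀ
  have hMP : a ⬝ᵥ MP *ᵥ b ≤ a ⬝ᵥ b :=
    hab.dotProduct_mulVec_le_of_mem_doublyStochastic (of_norm_sq_mem_doublyStochastic hP)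
  have hMQ : a ⬝ᵥ MQ *ᵥ b ≤ a ⬝ᵥ b :=
    hab.dotProduct_mulVec_le_of_mem_doublyStochastic
      (transpose_mem_doublyStochastic_iff.2 (of_norm_sq_mem_doublyStochastic hQ))
  have h_trace : trace (diagonal (fun i => (a i : 𝕜)) * P * diagonal (fun i => (b i : 𝕜)) * Q) =
      ∑ i, ∑ j, (a i : 𝕜) * P i j * b j * Q j i := by
    simp [trace, mul_apply, diagonal_apply, ite_mul, mul_assoc, Finset.mul_sum]
  calc _ ≤ ∑ i, ∑ j, a i * b j * (‖P i j‖ * ‖Q j i‖) := by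
        rw [h_trace]
        refine (norm_sum_le _ _).trans
          (Finset.sum_le_sum fun i _ => (norm_sum_le _ _).trans_eq ?_)
        refine Finset.sum_congr rfl fun j _ => ?_
        simp only [norm_mul, RCLike.norm_ofReal, abs_of_nonneg (ha i), abs_of_nonneg (hb j)]
        ring
    _ ≤ ∑ i, ∑ j, a i * b j * ((‖P i j‖ ^ 2 + ‖Q j i‖ ^ 2) / 2) := by
        gcongr with i _ j _
        · exact mul_nonneg (ha i) (hb j)
        · nlinarith [two_mul_le_add_sq ‖P i j‖ ‖Q j i‖]
    _ = (a ⬝ᵥ MP *ᵥ b + a ⬝ᵥ MQ *ᵥ b) / 2 := by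
        simp only [dotProduct, mulVec, MP, MQ, transpose_apply, of_apply, Finset.mul_sum,
          Finset.sum_div, ← Finset.sum_add_distrib]
        congr! 2 with i _ j _
        ring
    _ ≤ a ⬝ᵥ b := by linarith

theorem IsHermitian.toEuclideanLin_eigenvectorBasis {A : Matrix n n 𝕜} (hA : A.IsHermitian)
    (i : n) :
    toEuclideanLin A (hA.eigenvectorBasis i) = (hA.eigenvalues i : 𝕜) • hA.eigenvectorBasis i := by
  rw [toLpLin_apply, hA.mulVec_eigenvectorBasis, RCLike.real_smul_eq_coe_smul (K := 𝕜)]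
  rfl

theorem inner_toEuclideanLin_toEuclideanLin {m : Type*} [Fintype m] [DecidableEq m] (A : Matrix m n 𝕜)
    (x y : EuclideanSpace 𝕜 n) :
    inner 𝕜 (toEuclideanLin A x) (toEuclideanLin A y) = inner 𝕜 x (toEuclideanLin (Aᴴ * A) y) := by
  rw [toLpLin_mul_same, LinearMap.comp_apply, toEuclideanLin_conjTranspose_eq_adjoint,
    LinearMap.adjoint_inner_right]

theorem exists_unitary_eq_mul_diagonal_mul_conjTranspose (A : Matrix n n 𝕜) {σ : n → ℝ}
    (hσ : ∃ e : Equiv.Perm n, ∀ i,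
      σ i = √((isHermitian_conjTranspose_mul_self A).eigenvalues (e i))) :
    ∃ U ∈ unitaryGroup n 𝕜, ∃ V ∈ unitaryGroup n 𝕜,
      A = U * diagonal (fun i => (σ i : 𝕜)) * Vᴴ := by
  obtain ⟨e, hσ⟩ := hσ
  set H := isHermitian_conjTranspose_mul_self A
  set v := H.eigenvectorBasis.reindex e.symm
  have hv : ∀ i, v i = H.eigenvectorBasis (e i) := fun i => by simp [v]
  have h_inner : ∀ i j, inner 𝕜 (toEuclideanLin A (v i)) (toEuclideanLin A (v j)) =
      if i = j then (H.eigenvalues (e j) : 𝕜) else 0 := by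
    intro i j
    rw [inner_toEuclideanLin_toEuclideanLin, hv j, H.toEuclideanLin_eigenvectorBasis,
      inner_smul_right, ← hv j, orthonormal_iff_ite.mp v.orthonormal]
    simp
  obtain ⟨b, hb⟩ := exists_orthonormalBasis_eq_norm_smul_of_pairwise_inner_eq_zero
    (E := EuclideanSpace 𝕜 n) (f := fun i => toEuclideanLin A (v i)) finrank_euclideanSpace
    fun i j hij => by simp only [h_inner, if_neg hij]
  have h_norm : ∀ i, ‖toEuclideanLin A (v i)‖ = σ i := by
    intro i
    rw [hσ, ← Real.sqrt_sq (norm_nonneg _), @norm_sq_eq_re_inner 𝕜, h_inner]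
    simp
  set U := (EuclideanSpace.basisFun n 𝕜).toBasis.toMatrix b.toBasis
  set V := (EuclideanSpace.basisFun n 𝕜).toBasis.toMatrix v.toBasis
  refine ⟨U, (EuclideanSpace.basisFun n 𝕜).toMatrix_orthonormalBasis_mem_unitary b,
    V, (EuclideanSpace.basisFun n 𝕜).toMatrix_orthonormalBasis_mem_unitary v, ?_⟩
  have hAV : A * V = U * diagonal (fun i => (σ i : 𝕜)) := by
    ext k i
    have hb_k := congrArg (fun x : EuclideanSpace 𝕜 n => x k) (hb i)
    simp only [h_norm] at hb_k
    rw [mul_diagonal]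
    simpa [U, V, Module.Basis.toMatrix_apply, mul_apply, mulVec, dotProduct,
      RCLike.real_smul_eq_coe_mul, mul_comm] using hb_k
  calc A = A * (V * Vᴴ) := by simp [V]
    _ = U * diagonal (fun i => (σ i : 𝕜)) * Vᴴ := by rw [← Matrix.mul_assoc, hAV]

end Matrix

theorem IsSingularValueSeq.nonneg {n : ℕ} {A : Matrix (Fin n) (Fin n) ℂ} {σ : Fin n → ℝ}
    (hσ : IsSingularValueSeq A σ) : 0 ≤ σ := by
  obtain ⟨-, e, hσ⟩ := hσ
  exact fun i => (hσ i).symm ▸ Real.sqrt_nonneg _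

/-- Von Neumann's trace inequality. -/
theorem vonNeumann_trace_inequality {n : ℕ}
    (A B : Matrix (Fin n) (Fin n) ℂ) (σA σB : Fin n → ℝ)
    (hA : IsSingularValueSeq A σA) (hB : IsSingularValueSeq B σB) :
    ‖(A * B).trace‖ ≤ ∑ i, σA i * σB i := by
  obtain ⟨U, hU, V, hV, hA_svd⟩ := exists_unitary_eq_mul_diagonal_mul_conjTranspose A hA.2
  obtain ⟨W, hW, X, hX, hB_svd⟩ := exists_unitary_eq_mul_diagonal_mul_conjTranspose B hB.2
  have h_trace : (A * B).trace = trace (diagonal (fun i => (σA i : ℂ)) * (Vᴴ * W) *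
      diagonal (fun i => (σB i : ℂ)) * (Xᴴ * U)) := by
    rw [hA_svd, hB_svd]
    simp only [Matrix.mul_assoc]
    rw [trace_mul_comm U]
    simp [Matrix.mul_assoc]
  rw [h_trace]
  exact norm_trace_diagonal_mul_mul_diagonal_mul_le hA.nonneg hB.nonneg (hA.1.monovary hB.1)
    (mul_mem (Unitary.star_mem hV) hW) (mul_mem (Unitary.star_mem hX) hU)
end

section
/- Consider the 2×2 linear system: a·n·v1 + b·(k−1)·n·v2 = v1·(λ + a − c) and b·n·v1 + b·(k−1)·n·v2 = v2·(λ + b − c), where a, b, c, n, k are reals with b ≠ 0, n > 0, k > 1, and (v1, v2) ≠ (0,0). Then λ satisfies the quadratic equation (λ − λ_a)(λ − λ_b) = b²(k−1)n², where λ_a = (n−1)a + c and λ_b = ((k−1)n − 1)b + c. -/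
theorem two_block_eigen_quadratic (a b c lam v1 v2 n k : ℝ)
    (hb : b ≠ 0) (hn : 0 < n) (hk : 1 < k)
    (hv : ¬(v1 = 0 ∧ v2 = 0))
    (h1 : a * n * v1 + b * (k - 1) * n * v2 = v1 * (lam + a - c))
    (h2 : b * n * v1 + b * (k - 1) * n * v2 = v2 * (lam + b - c))
    (ha0 : lam + a - c ≠ 0) (hb0 : lam + b - c ≠ 0) :
    (lam - ((n - 1) * a + c)) * (lam - ((k - 1) * n - 1) * b - c)
      = b ^ 2 * (k - 1) * n ^ 2 := by
  have hk1 : k - 1 ≠ 0 := by linarith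
  have hn0 : n ≠ 0 := ne_of_gt hn
  have hv1 : v1 ≠ 0 := by
    intro h
    apply hv
    refine ⟨h, ?_⟩
    have : b * (k - 1) * n * v2 = 0 := by rw [h] at h1; linarith [h1]
    have := mul_eq_zero.mp this
    rcases this with h' | h'
    · exact absurd h' (mul_ne_zero (mul_ne_zero hb hk1) hn0)
    · exact h'
  have hv2 : v2 ≠ 0 := by
    intro h
    apply hv1
    have : b * n * v1 = 0 := by rw [h] at h2; linarith [h2]
    rcases mul_eq_zero.mp this with h' | h'
    · exact absurd h' (mul_ne_zero hb hn0)
    · exact h'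
  have e1 : v1 * (lam + a - c - a * n) = b * (k - 1) * n * v2 := by ring_nf; linarith [h1]
  have e2 : v2 * (lam + b - c - b * (k - 1) * n) = b * n * v1 := by ring_nf; linarith [h2]
  have key : v1 * v2 * ((lam - ((n - 1) * a + c)) * (lam - ((k - 1) * n - 1) * b - c))
      = v1 * v2 * (b ^ 2 * (k - 1) * n ^ 2) := by
    have h3 : (v1 * (lam + a - c - a * n)) * (v2 * (lam + b - c - b * (k - 1) * n))
        = (b * (k - 1) * n * v2) * (b * n * v1) := by rw [e1, e2]
    linear_combination h3
  exact mul_left_cancel₀ (mul_ne_zero hv1 hv2) key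
end

section
/- In a weighted bipartite graph with nonnegative edge weights, the greedy matching algorithm—repeatedly selecting the heaviest remaining edge not conflicting with already-chosen edges until no edge can be added—produces a matching whose total weight is at least half the weight of a maximum-weight matching. -/
/-- A set of edges of a bipartite graph (given as pairs in `L × R`) is a
matching if its edges are pairwise vertex-disjoint. -/
def IsMatching {L R : Type*} (M : Finset (L × R)) : Prop :=
  ∀ e ∈ M, ∀ f ∈ M, e ≠ f → e.1 ≠ f.1 ∧ e.2 ≠ f.2

/-- Two bipartite edges conflict if they share an endpoint. -/
def Conflicts {L R : Type*} (e f : L × R) : Prop := e.1 = f.1 ∨ e.2 = f.2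

/-- `M` is a greedy matching of the weighted bipartite graph `(E, w)`:
it is a matching contained in `E`, and every edge of `E` not chosen by the
greedy algorithm conflicts with some chosen edge of weight at least as large
(this holds for the matching produced by repeatedly selecting the heaviest
remaining non-conflicting edge until no edge can be added; in particular `M`
is maximal). -/
def IsGreedyMatching {L R : Type*} (E : Finset (L × R)) (w : L × R → ℝ)
    (M : Finset (L × R)) : Prop :=
  M ⊆ E ∧ IsMatching M ∧ ∀ e ∈ E, e ∉ M → ∃ f ∈ M, Conflicts e f ∧ w e ≤ w f

/-- The greedy matching achieves at least half the weight of any matching,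
in particular of a maximum-weight matching. -/
theorem greedy_matching_half_optimal {L R : Type*} [DecidableEq L] [DecidableEq R]
    (E : Finset (L × R)) (w : L × R → ℝ) (hw : ∀ e ∈ E, 0 ≤ w e)
    (M : Finset (L × R)) (hM : IsGreedyMatching E w M)
    (M' : Finset (L × R)) (hM'E : M' ⊆ E) (hM' : IsMatching M') :
    ∑ e ∈ M', w e ≤ 2 * ∑ e ∈ M, w e := by
  classical
  obtain ⟨hME, hMmatch, hgreedy⟩ := hM
  -- charging function
  have hchoice : ∀ e ∈ M', ∃ f, f ∈ M ∧ Conflicts e f ∧ w e ≤ w f := by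
    intro e he
    by_cases heM : e ∈ M
    · exact ⟨e, heM, Or.inl rfl, le_refl _⟩
    · obtain ⟨f, hf, hc, hle⟩ := hgreedy e (hM'E he) heM
      exact ⟨f, hf, hc, hle⟩
  choose! g hg1 hg2 hg3 using hchoice
  have h1 : ∑ e ∈ M', w e ≤ ∑ e ∈ M', w (g e) :=
    Finset.sum_le_sum fun e he => hg3 e he
  have h2 : ∑ e ∈ M', w (g e) = ∑ f ∈ M, ∑ e ∈ M'.filter (fun e => g e = f), w (g e) :=
    (Finset.sum_fiberwise_of_maps_to (fun e he => hg1 e he) _).symm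
  have hfiber : ∀ f ∈ M, (M'.filter (fun e => g e = f)).card ≤ 2 := by
    intro f hf
    have : (M'.filter (fun e => g e = f)).card ≤ (Finset.univ : Finset Bool).card := by
      apply Finset.card_le_card_of_injOn (fun e => decide (e.1 = f.1))
        (fun _ _ => Finset.mem_univ _)
      intro e1 he1 e2 he2 heq
      simp only [Finset.mem_coe, Finset.mem_filter] at he1 he2
      by_contra hne
      have hd := hM' e1 he1.1 e2 he2.1 hne
      have hc1 : Conflicts e1 f := he1.2 ▸ hg2 e1 he1.1
      have hc2 : Conflicts e2 f := he2.2 ▸ hg2 e2 he2.1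
      have hiff : (e1.1 = f.1) ↔ (e2.1 = f.1) := by simpa using heq
      rcases hc1 with h1' | h1' <;> rcases hc2 with h2' | h2'
      · exact hd.1 (h1'.trans h2'.symm)
      · exact hd.1 (h1'.trans (hiff.mp h1').symm)
      · exact hd.1 ((hiff.mpr h2').trans h2'.symm)
      · exact hd.2 (h1'.trans h2'.symm)
    simpa using this
  have h3 : ∀ f ∈ M, ∑ e ∈ M'.filter (fun e => g e = f), w (g e) ≤ 2 * w f := by
    intro f hf
    have hwf : 0 ≤ w f := hw f (hME hf)
    calc ∑ e ∈ M'.filter (fun e => g e = f), w (g e)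
        = ∑ e ∈ M'.filter (fun e => g e = f), w f := by
          apply Finset.sum_congr rfl
          intro e he
          rw [(Finset.mem_filter.mp he).2]
      _ = (M'.filter (fun e => g e = f)).card * w f := by
          rw [Finset.sum_const, nsmul_eq_mul]
      _ ≤ 2 * w f := by
          apply mul_le_mul_of_nonneg_right _ hwf
          exact_mod_cast hfiber f hf
  calc ∑ e ∈ M', w e ≤ ∑ e ∈ M', w (g e) := h1
    _ = ∑ f ∈ M, ∑ e ∈ M'.filter (fun e => g e = f), w (g e) := h2
    _ ≤ ∑ f ∈ M, 2 * w f := Finset.sum_le_sum h3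
    _ = 2 * ∑ e ∈ M, w e := by rw [Finset.mul_sum]
end
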